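/- For any two sequences (a_n)_{n≥1} and (a_{−n})_{n≥1} of rationals, the following identity of formal power series in t over ℚ holds: ∑_{(μ,ν)} (∏_i a_{μ_i})·(∏_j a_{−ν_j})·⟨β_μ ∘ β_{−ν}⟩·t^{|μ|+|ν|}/(z_μ·z_ν) = exp(∑_{n≥1} (a_n·a_{−n}/n)·t^{2n}), where the sum on the left is over all pairs of partitions (μ, ν); the left-hand side is the expansion of ⟨exp(∑_{n≥1} (a_n t^n/n) β_n) · exp(∑_{n≥1} (a_{−n} t^n/n) β_{−n})⟩. -/

import Mathlib

/-!
`β_{−ν}` creates `p_ν` from the vacuum and `β_μ` differentiates, so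
`⟨β_μ β_{−ν}⟩ = δ_{μν} z_μ` and the left side collapses to `∑_n Z_n(h) t^{2n}`, where
`Z_n = ∑_{μ ⊢ n} p_μ / z_μ` is the cycle index of `S_n` evaluated at `p_k = h_k = a_k a_{−k}`.
The right side is `exp (∑ h_k s^k / k)` at `s = t²`, and the coefficients of this exponential are
the `Z_n(h)`: both satisfy `n c_n = ∑_k h_k c_{n−k}` with `c_0 = 1`. For `Z_n` this comes from
removing one part of `μ`, for the exponential `E = exp F` from `t E' = t F' E`.
-/

open MvPolynomial

/-- `Λ = ℚ[p_1, p_2, …]`, the polynomial ring in countably many variables `p_n`, `n ≥ 1`. -/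
abbrev Lambda : Type := MvPolynomial ℕ+ ℚ

/-- The bosonic operators: `β_n f = p_{-n}·f` for `n < 0`, `β_0 = 0`,
`β_n f = n·∂f/∂p_n` for `n > 0`. -/
noncomputable def beta (n : ℤ) : Module.End ℚ Lambda :=
  if h : n < 0 then
    LinearMap.mulLeft ℚ (X (⟨n.natAbs, Int.natAbs_pos.mpr (by omega)⟩ : ℕ+))
  else if h' : 0 < n then
    (n : ℚ) • (pderiv (⟨n.natAbs, Int.natAbs_pos.mpr (by omega)⟩ : ℕ+)).toLinearMap
  else 0

lemma pderiv_pderiv_comm {σ : Type*} (i j : σ) (p : MvPolynomial σ ℚ) :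
    pderiv i (pderiv j p) = pderiv j (pderiv i p) := by
  classical
  induction p using MvPolynomial.induction_on with
  | C a => simp
  | add p q hp hq => simp [hp, hq]
  | mul_X p s ih =>
    simp only [pderiv_mul, map_add, ih, pderiv_X, Pi.single_apply]
    split_ifs <;> simp <;> ring

lemma beta_zero : beta 0 = 0 := by simp [beta]

lemma beta_of_pos {n : ℤ} (h : 0 < n) :
    beta n = (n : ℚ) • (pderiv (⟨n.natAbs, Int.natAbs_pos.mpr (by omega)⟩ : ℕ+)).toLinearMap := by
  rw [beta, dif_neg (by omega), dif_pos h]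

lemma beta_of_neg {n : ℤ} (h : n < 0) :
    beta n = LinearMap.mulLeft ℚ (X (⟨n.natAbs, Int.natAbs_pos.mpr (by omega)⟩ : ℕ+) : Lambda) := by
  rw [beta, dif_pos h]

/-- Operators `β_m`, `β_n` with `m, n ≥ 0` commute. -/
lemma beta_nonneg_commute {m n : ℤ} (hm : 0 ≤ m) (hn : 0 ≤ n) :
    Commute (beta m) (beta n) := by
  rcases hm.eq_or_lt with rfl | h1
  · rw [beta_zero]; exact Commute.zero_left _
  rcases hn.eq_or_lt with rfl | h2
  · rw [beta_zero]; exact Commute.zero_right _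
  rw [beta_of_pos h1, beta_of_pos h2]
  have key : ((pderiv (⟨m.natAbs, Int.natAbs_pos.mpr (by omega)⟩ : ℕ+)).toLinearMap :
      Module.End ℚ Lambda) * (pderiv (⟨n.natAbs, Int.natAbs_pos.mpr (by omega)⟩ : ℕ+)).toLinearMap =
      (pderiv (⟨n.natAbs, Int.natAbs_pos.mpr (by omega)⟩ : ℕ+)).toLinearMap *
        (pderiv (⟨m.natAbs, Int.natAbs_pos.mpr (by omega)⟩ : ℕ+)).toLinearMap :=
    LinearMap.ext fun p => pderiv_pderiv_comm _ _ p
  exact (Commute.smul_left key _).smul_right _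

/-- Operators `β_m`, `β_n` with `m, n ≤ 0` commute. -/
lemma beta_nonpos_commute {m n : ℤ} (hm : m ≤ 0) (hn : n ≤ 0) :
    Commute (beta m) (beta n) := by
  rcases hm.lt_or_eq with h1 | rfl
  swap
  · rw [beta_zero]; exact Commute.zero_left _
  rcases hn.lt_or_eq with h2 | rfl
  swap
  · rw [beta_zero]; exact Commute.zero_right _
  rw [beta_of_neg h1, beta_of_neg h2]
  refine LinearMap.ext fun p => ?_
  simp only [Module.End.mul_apply, LinearMap.mulLeft_apply]
  ring

/-- For a partition `μ` (the multiset of its parts), the operator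
`β_μ = β_{μ_1} ∘ ⋯ ∘ β_{μ_l}`. -/
noncomputable def betaPos (μ : Multiset ℕ) : Module.End ℚ Lambda :=
  (μ.map fun a : ℕ => beta (a : ℤ)).noncommProd (by
    intro x hx y hy _
    obtain ⟨a, _, rfl⟩ := Multiset.mem_map.mp hx
    obtain ⟨b, _, rfl⟩ := Multiset.mem_map.mp hy
    exact beta_nonneg_commute (Int.natCast_nonneg _) (Int.natCast_nonneg _))

/-- For a partition `ν` (the multiset of its parts), the operator
`β_{−ν} = β_{−ν_1} ∘ ⋯ ∘ β_{−ν_l}`. -/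
noncomputable def betaNeg (ν : Multiset ℕ) : Module.End ℚ Lambda :=
  (ν.map fun a : ℕ => beta (-(a : ℤ))).noncommProd (by
    intro x hx y hy _
    obtain ⟨a, _, rfl⟩ := Multiset.mem_map.mp hx
    obtain ⟨b, _, rfl⟩ := Multiset.mem_map.mp hy
    exact beta_nonpos_commute (by simp) (by simp))

/-- The vacuum expectation value `⟨A⟩`: the coefficient of the constant monomial
in `A(1) ∈ Λ`. -/
noncomputable def vev (A : Module.End ℚ Lambda) : ℚ := constantCoeff (A 1)

/-- For a partition `μ`, `z_μ = ∏_k k^{m_k}·m_k!`. -/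
noncomputable def zPart (μ : Multiset ℕ) : ℚ :=
  ∏ a ∈ μ.toFinset, ((a : ℚ) ^ μ.count a * (μ.count a).factorial)

/-- The formal exponential of a power series (with zero constant term). -/
noncomputable def fexp (f : PowerSeries ℚ) : PowerSeries ℚ :=
  PowerSeries.mk fun N =>
    ∑ m ∈ Finset.range (N + 1), (PowerSeries.coeff N (f ^ m)) / m.factorial

open Finset.HasAntidiagonal

namespace PowerSeries

lemma coeff_pow_eq_zero_of_lt {R : Type*} [CommSemiring R] {f : PowerSeries R}
    (hf : constantCoeff f = 0) {n m : ℕ} (h : n < m) : coeff n (f ^ m) = 0 :=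
  X_pow_dvd_iff.1 (pow_dvd_pow_of_dvd (X_dvd_iff.2 hf) m) n h

lemma coeff_X_mul_derivative {R : Type*} [CommSemiring R] (f : PowerSeries R)
    (n : ℕ) : coeff n (X * derivative R f) = n * coeff n f := by
  cases n with
  | zero => simp
  | succ n => rw [coeff_succ_X_mul, coeff_derivative, mul_comm, Nat.cast_succ]

lemma coeff_fexp_eq_sum_range {f : PowerSeries ℚ} (hf : constantCoeff f = 0) {n K : ℕ}
    (h : n < K) : coeff n (fexp f) = ∑ m ∈ Finset.range K, coeff n (f ^ m) / m.factorial := by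
  rw [fexp, coeff_mk]
  refine Finset.sum_subset (Finset.range_subset_range.2 h) fun m _ hmn => ?_
  rw [coeff_pow_eq_zero_of_lt hf (by simpa using hmn), zero_div]

lemma fexp_expand {f : PowerSeries ℚ} (hf : constantCoeff f = 0) (p : ℕ) (hp : p ≠ 0) :
    fexp (expand p hp f) = expand p hp (fexp f) := by
  ext n
  rw [coeff_expand]
  split_ifs with hpn
  · rw [coeff_fexp_eq_sum_range (by simpa using hf) n.lt_succ_self,
      coeff_fexp_eq_sum_range hf ((Nat.div_le_self n p).trans_lt n.lt_succ_self)]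
    simp_rw [← map_pow, coeff_expand, if_pos hpn]
  · rw [fexp, coeff_mk]
    exact Finset.sum_eq_zero fun m _ => by
      rw [← map_pow, coeff_expand_of_not_dvd _ _ _ hpn, zero_div]

/-- The coefficient form of the differential equation `t E' = t F' E` for `E = exp F`. -/
lemma natCast_mul_coeff_fexp {f : PowerSeries ℚ} (hf : constantCoeff f = 0) (n : ℕ) :
    n * coeff n (fexp f) =
      ∑ p ∈ antidiagonal n, (p.1 * coeff p.1 f) * coeff p.2 (fexp f) := by
  have hpow (m : ℕ) : (n : ℚ) * coeff n (f ^ (m + 1)) =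
      (m + 1) * coeff n (X * derivative ℚ f * f ^ m) := by
    rw [← coeff_X_mul_derivative, derivative_pow, Nat.add_sub_cancel, ← coeff_C_mul]
    congr 1
    rw [map_add, map_natCast, map_one]
    push_cast
    ring
  calc (n : ℚ) * coeff n (fexp f)
      = ∑ m ∈ Finset.range (n + 1 + 1), n * coeff n (f ^ m) / m.factorial := by
        rw [coeff_fexp_eq_sum_range hf (K := n + 1 + 1) (by omega), Finset.mul_sum]
        simp only [mul_div_assoc]
    _ = ∑ m ∈ Finset.range (n + 1), coeff n (X * derivative ℚ f * f ^ m) / (m.factorial : ℚ) := by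
        rw [Finset.sum_range_succ', pow_zero, ← coeff_X_mul_derivative, derivative_one, mul_zero,
          map_zero, zero_div, add_zero]
        refine Finset.sum_congr rfl fun m _ => ?_
        rw [hpow, Nat.factorial_succ, Nat.cast_mul, Nat.cast_succ,
          mul_div_mul_left _ _ (by positivity)]
    _ = ∑ p ∈ antidiagonal n, coeff p.1 (X * derivative ℚ f) *
          ∑ m ∈ Finset.range (n + 1), coeff p.2 (f ^ m) / (m.factorial : ℚ) := by
        simp only [coeff_mul _ (X * derivative ℚ f), Finset.sum_div, Finset.mul_sum, mul_div_assoc]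
        exact Finset.sum_comm
    _ = _ := Finset.sum_congr rfl fun p hp => by
        have hp2 : p.2 < n + 1 := by have := mem_antidiagonal.1 hp; omega
        rw [coeff_X_mul_derivative, coeff_fexp_eq_sum_range hf hp2]

end PowerSeries

lemma eq_of_natCast_mul_eq_sum_antidiagonal {R : Type*} [CommRing R] [IsDomain R] [CharZero R]
    {u v c : ℕ → R} (hc : c 0 = 0) (h0 : u 0 = v 0)
    (hu : ∀ n, n * u n = ∑ p ∈ antidiagonal n, c p.1 * u p.2)
    (hv : ∀ n, n * v n = ∑ p ∈ antidiagonal n, c p.1 * v p.2) : u = v := by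
  funext n
  induction n using Nat.strong_induction_on with
  | _ n ih =>
    rcases n with _ | n
    · exact h0
    refine mul_left_cancel₀ (Nat.cast_ne_zero.2 n.succ_ne_zero) ?_
    rw [hu, hv]
    refine Finset.sum_congr rfl fun p hp => ?_
    rcases Nat.eq_zero_or_pos p.1 with h | h
    · rw [h, hc, zero_mul, zero_mul]
    · rw [ih p.2 (by have := mem_antidiagonal.1 hp; omega)]

lemma sum_antidiagonal_ite_fst_eq_snd {M : Type*} [AddCommMonoid M] (f : ℕ → M) (n : ℕ) :
    ∑ p ∈ antidiagonal n, (if p.1 = p.2 then f p.1 else 0) = if 2 ∣ n then f (n / 2) else 0 := by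
  split_ifs with hn
  · obtain ⟨k, rfl⟩ := hn
    rw [Finset.sum_eq_single_of_mem (k, k) (mem_antidiagonal.2 (two_mul k).symm)]
    · simp
    · rintro ⟨i, j⟩ hij hne
      rw [mem_antidiagonal] at hij
      rw [if_neg]
      rintro (rfl : i = j)
      exact hne (by ext <;> simp <;> omega)
  · refine Finset.sum_eq_zero fun p hp => if_neg fun h => hn ⟨p.1, ?_⟩
    rw [← mem_antidiagonal.1 hp, h, two_mul]

lemma zPart_cons (a : ℕ) (m : Multiset ℕ) :
    zPart (a ::ₘ m) = (a * (m.count a + 1) : ℚ) * zPart m := by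
  classical
  have hcount : ∀ x ∈ m.toFinset.erase a, (a ::ₘ m).count x = m.count x := fun x hx =>
    Multiset.count_cons_of_ne (Finset.ne_of_mem_erase hx) m
  rw [zPart, zPart, Multiset.toFinset_cons,
    ← Finset.mul_prod_erase _ _ (Finset.mem_insert_self _ _), Finset.erase_insert_eq_erase,
    Finset.prod_congr rfl fun x hx => by rw [hcount x hx], Multiset.count_cons_self]
  by_cases ha : a ∈ m
  · rw [← Finset.mul_prod_erase _ _ (Multiset.mem_toFinset.2 ha)]
    push_cast [Nat.factorial_succ, pow_succ]
    ring
  · rw [Finset.erase_eq_of_notMem (by simpa using ha), Multiset.count_eq_zero_of_notMem ha]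
    simp

lemma zPart_ne_zero {m : Multiset ℕ} (hm : 0 ∉ m) : zPart m ≠ 0 :=
  Finset.prod_ne_zero_iff.2 fun a ha => by
    have : a ≠ 0 := fun h => hm (h ▸ Multiset.mem_toFinset.1 ha)
    positivity

/-- `p_a`, with `p_0 = 0` so that `β_{-a}` is multiplication by `p_a` also for `a = 0`. -/
noncomputable def powerSum (a : ℕ) : Lambda :=
  if h : 0 < a then X (Nat.toPNat a h) else 0

lemma beta_neg_natCast (a : ℕ) : beta (-a) = LinearMap.mulLeft ℚ (powerSum a) := by
  rcases Nat.eq_zero_or_pos a with rfl | ha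
  · ext
    simp [beta_zero, powerSum]
  · rw [beta_of_neg (by omega), powerSum, dif_pos ha]
    congr
    simp

lemma betaPos_zero : betaPos 0 = 1 := by
  simp [betaPos]

lemma betaPos_cons (a : ℕ) (μ : Multiset ℕ) : betaPos (a ::ₘ μ) = betaPos μ * beta a := by
  simp only [betaPos, Multiset.map_cons, Multiset.noncommProd_cons']

lemma betaNeg_cons (a : ℕ) (ν : Multiset ℕ) : betaNeg (a ::ₘ ν) = beta (-a) * betaNeg ν := by
  simp only [betaNeg, Multiset.map_cons, Multiset.noncommProd_cons]

lemma betaNeg_apply_one (ν : Multiset ℕ) : betaNeg ν 1 = (ν.map powerSum).prod := by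
  induction ν using Multiset.induction_on with
  | empty => simp [betaNeg]
  | cons a ν ih =>
    rw [betaNeg_cons, Module.End.mul_apply, ih, beta_neg_natCast, LinearMap.mulLeft_apply,
      Multiset.map_cons, Multiset.prod_cons]

lemma pderiv_powerSum {a : ℕ} (ha : 0 < a) (b : ℕ) :
    pderiv (Nat.toPNat a ha) (powerSum b) = if b = a then 1 else 0 := by
  rcases eq_or_ne b a with rfl | hba
  · rw [if_pos rfl, powerSum, dif_pos ha, pderiv_X_self]
  · rw [if_neg hba, powerSum]
    split_ifs with hb
    · exact pderiv_X_of_ne fun h => hba (congrArg PNat.val h)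
    · exact map_zero _

lemma pderiv_prod_powerSum {a : ℕ} (ha : 0 < a) (ν : Multiset ℕ) :
    pderiv (Nat.toPNat a ha) (ν.map powerSum).prod =
      ν.count a • ((ν.erase a).map powerSum).prod := by
  induction ν using Multiset.induction_on with
  | empty => simp
  | cons b ν ih =>
    rw [Multiset.map_cons, Multiset.prod_cons, Derivation.leibniz, ih, pderiv_powerSum ha]
    rcases eq_or_ne b a with rfl | hba
    · rw [Multiset.count_cons_self, Multiset.erase_cons_head, if_pos rfl, add_smul, one_smul]
      simp only [smul_eq_mul, mul_one, mul_smul_comm]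
      by_cases hb : b ∈ ν
      · rw [← Multiset.prod_cons, ← Multiset.map_cons, Multiset.cons_erase hb]
      · simp [Multiset.count_eq_zero_of_notMem hb]
    · rw [if_neg hba, smul_zero, add_zero, Multiset.count_cons_of_ne (Ne.symm hba),
        Multiset.erase_cons_tail _ hba, Multiset.map_cons, Multiset.prod_cons]
      simp only [smul_eq_mul, mul_smul_comm]

lemma beta_natCast_apply_prod_powerSum (a : ℕ) (ν : Multiset ℕ) :
    beta a (ν.map powerSum).prod = ((a * ν.count a : ℕ) : ℚ) • ((ν.erase a).map powerSum).prod := by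
  rcases Nat.eq_zero_or_pos a with rfl | ha
  · simp [beta_zero]
  rw [beta_of_pos (by omega)]
  change ((a : ℤ) : ℚ) • pderiv (Nat.toPNat a ha) _ = _
  rw [pderiv_prod_powerSum ha, ← Nat.cast_smul_eq_nsmul ℚ, smul_smul]
  push_cast
  rfl

lemma constantCoeff_powerSum (a : ℕ) : constantCoeff (powerSum a) = 0 := by
  unfold powerSum
  split_ifs <;> simp

lemma constantCoeff_betaPos_prod_powerSum (μ ν : Multiset ℕ) :
    constantCoeff (betaPos μ (ν.map powerSum).prod) = if μ = ν then zPart ν else 0 := by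
  induction μ using Multiset.induction_on generalizing ν with
  | empty =>
    rw [betaPos_zero, Module.End.one_apply, map_multiset_prod, Multiset.map_map]
    rcases Multiset.empty_or_exists_mem ν with rfl | ⟨b, hb⟩
    · simp [zPart]
    · rw [if_neg fun h => by simp [← h] at hb]
      exact Multiset.prod_eq_zero (Multiset.mem_map.2 ⟨b, hb, constantCoeff_powerSum b⟩)
  | cons a μ ih =>
    rw [betaPos_cons, Module.End.mul_apply, beta_natCast_apply_prod_powerSum, map_smul,
      constantCoeff_smul, smul_eq_mul, ih]
    by_cases ha : a ∈ ν
    · obtain ⟨ν, rfl⟩ := Multiset.exists_cons_of_mem ha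
      simp only [Multiset.count_cons_self, Multiset.erase_cons_head, Multiset.cons_inj_right,
        zPart_cons]
      split_ifs <;> push_cast <;> ring
    · rw [Multiset.count_eq_zero_of_notMem ha,
        if_neg fun h : a ::ₘ μ = ν => ha (h ▸ Multiset.mem_cons_self a μ)]
      simp

lemma vev_betaPos_mul_betaNeg (μ ν : Multiset ℕ) :
    vev (betaPos μ * betaNeg ν) = if μ = ν then zPart ν else 0 := by
  rw [vev, Module.End.mul_apply, betaNeg_apply_one, constantCoeff_betaPos_prod_powerSum]

noncomputable def partitionParts (n : ℕ) : Finset (Multiset ℕ) :=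
  (Finset.univ : Finset n.Partition).image Nat.Partition.parts

lemma mem_partitionParts {n : ℕ} {m : Multiset ℕ} : m ∈ partitionParts n ↔ m.sum = n ∧ 0 ∉ m := by
  refine ⟨?_, fun ⟨hsum, hpos⟩ => ?_⟩
  · rintro hm
    obtain ⟨μ, -, rfl⟩ := Finset.mem_image.1 hm
    exact ⟨μ.parts_sum, fun h => (μ.parts_pos h).false⟩
  · exact Finset.mem_image.2
      ⟨⟨m, fun hi => Nat.pos_of_ne_zero fun h => hpos (h ▸ hi), hsum⟩, Finset.mem_univ _, rfl⟩

lemma sum_partition_eq_sum_partitionParts {M : Type*} [AddCommMonoid M] (n : ℕ)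
    (F : Multiset ℕ → M) : ∑ μ : n.Partition, F μ.parts = ∑ m ∈ partitionParts n, F m :=
  (Finset.sum_image fun _ _ _ _ h => Nat.Partition.ext h).symm

/-- The cycle index `Z(S_n) = ∑_{μ ⊢ n} p_μ / z_μ` of the symmetric group at `p_k = g k`. -/
noncomputable def cycleIndex (g : ℕ → ℚ) (n : ℕ) : ℚ :=
  ∑ m ∈ partitionParts n, (m.map g).prod / zPart m

lemma cycleIndex_zero (g : ℕ → ℚ) : cycleIndex g 0 = 1 := by
  have : partitionParts 0 = {0} := by
    ext m
    simp only [mem_partitionParts, Finset.mem_singleton, Multiset.sum_eq_zero_iff]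
    exact ⟨fun ⟨h0, hpos⟩ => Multiset.eq_zero_of_forall_notMem fun x hx => hpos (h0 x hx ▸ hx),
      by rintro rfl; simp⟩
  simp [cycleIndex, this, zPart]

/-- Removing one part `k` of `m` divides `z_m` by `k · (multiplicity of k in m)`. -/
lemma natCast_sum_mul_div_zPart (g : ℕ → ℚ) {m : Multiset ℕ} (hm : 0 ∉ m) :
    (m.sum : ℚ) * ((m.map g).prod / zPart m) =
      ∑ k ∈ m.toFinset, g k * (((m.erase k).map g).prod / zPart (m.erase k)) := by
  rw [Finset.sum_multiset_count m, Nat.cast_sum, Finset.sum_mul]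
  refine Finset.sum_congr rfl fun k hk => ?_
  obtain ⟨m', rfl⟩ := Multiset.exists_cons_of_mem (Multiset.mem_toFinset.1 hk)
  have hk0 : (k : ℚ) ≠ 0 := Nat.cast_ne_zero.2 fun h => hm (h ▸ Multiset.mem_cons_self k m')
  have hz : zPart m' ≠ 0 := zPart_ne_zero fun h => hm (Multiset.mem_cons_of_mem h)
  rw [Multiset.erase_cons_head, zPart_cons, Multiset.count_cons_self, Multiset.map_cons,
    Multiset.prod_cons]
  push_cast [smul_eq_mul]
  field_simp

lemma sum_partitionParts_sum_erase {M : Type*} [AddCommMonoid M] (n : ℕ)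
    (F : ℕ → Multiset ℕ → M) :
    ∑ m ∈ partitionParts n, ∑ k ∈ m.toFinset, F k (m.erase k) =
      ∑ p ∈ antidiagonal n, if p.1 = 0 then 0 else ∑ m ∈ partitionParts p.2, F p.1 m := by
  rw [Finset.sum_ite, Finset.sum_const_zero, zero_add, Finset.sum_sigma', Finset.sum_sigma']
  refine Finset.sum_nbij' (fun x => ⟨(x.2, n - x.2), x.1.erase x.2⟩)
    (fun y => ⟨y.1.1 ::ₘ y.2, y.1.1⟩) ?_ ?_ ?_ ?_ fun _ _ => rfl
  · rintro ⟨m, k⟩ hx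
    simp only [Finset.mem_sigma] at hx
    obtain ⟨hm, hk⟩ := hx
    obtain ⟨hsum, hpos⟩ := mem_partitionParts.1 hm
    obtain ⟨m', rfl⟩ := Multiset.exists_cons_of_mem (Multiset.mem_toFinset.1 hk)
    simp only [Multiset.sum_cons, Multiset.mem_cons, not_or] at hsum hpos
    simp only [Finset.mem_sigma, Finset.mem_filter, mem_antidiagonal, Multiset.erase_cons_head,
      mem_partitionParts]
    exact ⟨⟨by omega, Ne.symm hpos.1⟩, by omega, hpos.2⟩
  · rintro ⟨⟨k, l⟩, m'⟩ hy
    simp only [Finset.mem_sigma, Finset.mem_filter, mem_antidiagonal, mem_partitionParts] at hy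
    simp only [Finset.mem_sigma, mem_partitionParts, Multiset.sum_cons, Multiset.mem_cons, not_or,
      Multiset.mem_toFinset, true_or, and_true]
    obtain ⟨⟨hkl, hk⟩, hsum, hpos⟩ := hy
    exact ⟨by omega, Ne.symm hk, hpos⟩
  · rintro ⟨m, k⟩ hx
    simp [Multiset.cons_erase (Multiset.mem_toFinset.1 (Finset.mem_sigma.1 hx).2)]
  · rintro ⟨⟨k, l⟩, m'⟩ hy
    simp only [Finset.mem_sigma, Finset.mem_filter, mem_antidiagonal] at hy
    simp only [Multiset.erase_cons_head, Sigma.mk.injEq, Prod.mk.injEq, heq_eq_eq, true_and,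
      and_true]
    omega

lemma cycleIndex_rec (g : ℕ → ℚ) (n : ℕ) :
    n * cycleIndex g n =
      ∑ p ∈ antidiagonal n, (if p.1 = 0 then 0 else g p.1) * cycleIndex g p.2 := by
  calc (n : ℚ) * cycleIndex g n
      = ∑ m ∈ partitionParts n, (m.sum : ℚ) * ((m.map g).prod / zPart m) := by
        rw [cycleIndex, Finset.mul_sum]
        refine Finset.sum_congr rfl fun m hm => ?_
        rw [(mem_partitionParts.1 hm).1]
    _ = ∑ m ∈ partitionParts n, ∑ k ∈ m.toFinset,
          g k * (((m.erase k).map g).prod / zPart (m.erase k)) :=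
        Finset.sum_congr rfl fun m hm => natCast_sum_mul_div_zPart g (mem_partitionParts.1 hm).2
    _ = _ := by
        rw [sum_partitionParts_sum_erase n fun k m => g k * ((m.map g).prod / zPart m)]
        refine Finset.sum_congr rfl fun p _ => ?_
        split_ifs
        · rw [zero_mul]
        · rw [cycleIndex, Finset.mul_sum]

/-- The exponent has constant term `g 0 / 0 = 0`. -/
lemma coeff_fexp_eq_cycleIndex (g : ℕ → ℚ) (n : ℕ) :
    PowerSeries.coeff n (fexp (PowerSeries.mk fun k => g k / k)) = cycleIndex g n := by
  have hf : PowerSeries.constantCoeff (PowerSeries.mk fun k => g k / k) = 0 := by simp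
  refine congrFun (eq_of_natCast_mul_eq_sum_antidiagonal
    (u := fun n => PowerSeries.coeff n (fexp (PowerSeries.mk fun k => g k / k)))
    (c := fun k => if k = 0 then 0 else g k)
    (if_pos rfl) ?_ ?_ (cycleIndex_rec g)) n
  · rw [cycleIndex_zero, PowerSeries.coeff_fexp_eq_sum_range hf zero_lt_one]
    simp
  · intro n
    rw [PowerSeries.natCast_mul_coeff_fexp hf]
    refine Finset.sum_congr rfl fun p _ => ?_
    rw [PowerSeries.coeff_mk]
    split_ifs with h
    · simp [h]
    · field_simp

lemma sum_partition_vev_eq_ite_cycleIndex (ap am : ℕ → ℚ) (i j : ℕ) :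
    ∑ μ : i.Partition, ∑ ν : j.Partition,
        (μ.parts.map ap).prod * (ν.parts.map am).prod *
          vev (betaPos μ.parts * betaNeg ν.parts) / (zPart μ.parts * zPart ν.parts) =
      if i = j then cycleIndex (fun k => ap k * am k) i else 0 := by
  have hinner (m : Multiset ℕ) (hm : m ∈ partitionParts i) :
      ∑ m' ∈ partitionParts j, (m.map ap).prod * (m'.map am).prod *
          (if m = m' then zPart m' else 0) / (zPart m * zPart m') =
        if i = j then ((m.map fun k => ap k * am k).prod / zPart m) else 0 := by
    obtain ⟨hsum, hpos⟩ := mem_partitionParts.1 hm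
    simp only [mul_ite, mul_zero, ite_div, zero_div, Finset.sum_ite_eq, mem_partitionParts, hsum,
      hpos, not_false_eq_true, and_true]
    split_ifs
    · rw [Multiset.prod_map_mul]
      field_simp [zPart_ne_zero hpos]
    · rfl
  calc _ = ∑ m ∈ partitionParts i, ∑ m' ∈ partitionParts j, (m.map ap).prod * (m'.map am).prod *
          (if m = m' then zPart m' else 0) / (zPart m * zPart m') := by
        simp only [← sum_partition_eq_sum_partitionParts, vev_betaPos_mul_betaNeg]
    _ = _ := by
        rw [Finset.sum_congr rfl hinner, cycleIndex]
        split_ifs <;> simp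

/-- `ap n` stands for `a_n` and `am n` for `a_{−n}`. -/
theorem vev_exp_exp (ap am : ℕ → ℚ) :
    (PowerSeries.mk fun N =>
        ∑ p ∈ Finset.HasAntidiagonal.antidiagonal N, ∑ μ : Nat.Partition p.1, ∑ ν : Nat.Partition p.2,
          (μ.parts.map ap).prod * (ν.parts.map am).prod *
            vev (betaPos μ.parts * betaNeg ν.parts) / (zPart μ.parts * zPart ν.parts)) =
      fexp (PowerSeries.mk fun N =>
        if N ≠ 0 ∧ Even N then ap (N / 2) * am (N / 2) * ((N : ℚ) / 2)⁻¹ else 0) := by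
  have hexponent : (PowerSeries.mk fun N =>
      if N ≠ 0 ∧ Even N then ap (N / 2) * am (N / 2) * ((N : ℚ) / 2)⁻¹ else 0) =
        PowerSeries.expand 2 two_ne_zero (PowerSeries.mk fun k => ap k * am k / k) := by
    ext N
    rw [PowerSeries.coeff_expand, PowerSeries.coeff_mk, PowerSeries.coeff_mk]
    simp only [even_iff_two_dvd]
    by_cases h2 : 2 ∣ N
    · obtain ⟨k, rfl⟩ := h2
      rcases eq_or_ne k 0 with rfl | hk
      · simp
      · simp only [hk, mul_ne_zero_iff, ne_eq, OfNat.ofNat_ne_zero, not_false_eq_true, and_self,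
          dvd_mul_right, if_true, Nat.mul_div_cancel_left k two_pos]
        push_cast
        field_simp
    · simp [h2]
  rw [hexponent, PowerSeries.fexp_expand (by simp)]
  ext N
  rw [PowerSeries.coeff_mk, PowerSeries.coeff_expand, coeff_fexp_eq_cycleIndex]
  simp only [sum_partition_vev_eq_ite_cycleIndex, sum_antidiagonal_ite_fst_eq_snd]
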